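/- arXiv:1904.07327 — 3 statements merged into one kernel-verified Lean document; each statement's English description precedes it below -/
import Mathlib

section
/- Let p ≥ 2 be an even integer, S : [0,T] → ℝ continuous with osc(S,π_n) → 0, and suppose the discrete local times L_t^{π_n;p}(·) converge uniformly for each t to a jointly continuous limit L^{p,c}, with the partition mesh tending to zero. Then for every a ∈ ℝ and t ∈ [0,T]: ∫_0^t 1_{{S(u) < a}} dL^{p,c}_u(a) = 0, ∫_0^t 1_{{S(u) > a}} dL^{p,c}_u(a) = 0, and consequently ∫_0^t 1_{{S(u) = a}} dL^{p,c}_u(a) = L^{p,c}_t(a), where the integrals are Lebesgue-Stieltjes integrals in the time variable against the nondecreasing function t ↦ L^{p,c}_t(a). -/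
open Filter MeasureTheory Set

/-- A nested sequence of partitions `0 = t_0^n < t_1^n < ... < t_{N(n)}^n = T` of `[0, T]`. -/
structure PartitionSeq (T : ℝ) where
  N : ℕ → ℕ
  pos : ∀ n, 0 < N n
  pt : ℕ → ℕ → ℝ
  pt_zero : ∀ n, pt n 0 = 0
  pt_last : ∀ n, pt n (N n) = T
  pt_mono : ∀ n, ∀ j, j < N n → pt n j < pt n (j + 1)
  nested : ∀ n, ∀ j, j ≤ N n → ∃ j', j' ≤ N (n + 1) ∧ pt (n + 1) j' = pt n j

/-- Oscillation of `S` along the partition `π_n`. -/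
noncomputable def oscP {T : ℝ} (S : ℝ → ℝ) (P : PartitionSeq T) (n : ℕ) : ℝ :=
  sSup {y | ∃ j < P.N n, ∃ u ∈ Icc (P.pt n j) (P.pt n (j + 1)),
    ∃ v ∈ Icc (P.pt n j) (P.pt n (j + 1)), y = |S u - S v|}

/-- Mesh of the partition `π_n`. -/
noncomputable def meshP {T : ℝ} (P : PartitionSeq T) (n : ℕ) : ℝ :=
  sSup {y | ∃ j < P.N n, y = P.pt n (j + 1) - P.pt n j}

/-- Partial sums `Σ_{t_j ≤ t} |S(t_{j+1}) - S(t_j)|^p` of `p`-th variation along `π_n`. -/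
noncomputable def pvarSum {T : ℝ} (S : ℝ → ℝ) (P : PartitionSeq T) (p : ℝ) (n : ℕ) (t : ℝ) : ℝ :=
  ∑ j ∈ Finset.range (P.N n),
    if P.pt n j ≤ t then |S (P.pt n (j + 1)) - S (P.pt n j)| ^ p else 0

/-- Discrete local time of order `p` of `S` along `π_n`:
`L_t^{π_n;p}(x) = Σ_{t_j ≤ t} 1_{⦇S(t_j),S(t_{j+1})⦈}(x) |S(t_{j+1}) - x|^{p-1}`. -/
noncomputable def discLT {T : ℝ} (S : ℝ → ℝ) (P : PartitionSeq T) (p : ℕ) (n : ℕ)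
    (t x : ℝ) : ℝ :=
  ∑ j ∈ Finset.range (P.N n),
    if P.pt n j ≤ t then
      Set.indicator (Set.uIoc (S (P.pt n j)) (S (P.pt n (j + 1))))
        (fun _ => |S (P.pt n (j + 1)) - x| ^ (p - 1)) x
    else 0

/-- `S` has a continuous local time `L` of order `p` along `P`: the oscillations tend to `0`,
the discrete local times converge uniformly in `x` for each `t ∈ [0,T]`, and the limit is
jointly continuous. -/
def HasCLT {T : ℝ} (P : PartitionSeq T) (p : ℕ) (S : ℝ → ℝ) (L : ℝ → ℝ → ℝ) : Prop :=
  Tendsto (oscP S P) atTop (nhds 0) ∧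
  (∀ t ∈ Icc (0 : ℝ) T, TendstoUniformly (fun n x => discLT S P p n t x) (fun x => L t x) atTop) ∧
  Continuous (fun q : ℝ × ℝ => L q.1 q.2)

/-- `S ∈ V_p(π)` with `p`-th variation function `V`. -/
def HasPVar {T : ℝ} (P : PartitionSeq T) (p : ℝ) (S : ℝ → ℝ) (V : ℝ → ℝ) : Prop :=
  Tendsto (oscP S P) atTop (nhds 0) ∧
  ContinuousOn V (Icc 0 T) ∧ MonotoneOn V (Icc 0 T) ∧
  ∀ t ∈ Icc (0 : ℝ) T, Tendsto (fun n => pvarSum S P p n t) atTop (nhds (V t))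

/-!
If `S ≠ a` on `[c, d]`, then `|S - a|` is bounded below on `[c, d]`; once the oscillation of `S`
along `π_n` is smaller than that bound, no increment of `S` starting in `(c, d]` crosses `a`, so
the discrete local times at `a` at times `c` and `d` coincide, and in the limit `L_c(a) = L_d(a)`.
By continuity of `S`, every time `u` with `S u ≠ a` has such an interval as a neighbourhood, hence
`{S ≠ a}` is null for `dL(a)`. Finally `L_0(a) = 0`, because the discrete local time at time `0`
is at most `osc(S, π_n)^(p-1)`.
-/

open scoped Topology

namespace PartitionSeq

variable {T : ℝ} (P : PartitionSeq T)

lemma monotoneOn_pt (n : ℕ) : MonotoneOn (P.pt n) (Iic (P.N n)) :=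
  monotoneOn_of_le_succ ordConnected_Iic fun j _ _ hj => by
    rw [Order.succ_eq_add_one] at hj ⊢
    exact (P.pt_mono n j hj).le

lemma pt_mem_Icc {n j : ℕ} (hj : j ≤ P.N n) : P.pt n j ∈ Icc 0 T := by
  have h0 := P.monotoneOn_pt n (Nat.zero_le _) hj (Nat.zero_le j)
  have hN := P.monotoneOn_pt n hj (mem_Iic.2 le_rfl) hj
  rw [P.pt_zero] at h0
  rw [P.pt_last] at hN
  exact ⟨h0, hN⟩

end PartitionSeq

lemma PartitionSeq.horizon_pos {T : ℝ} (P : PartitionSeq T) : 0 < T := by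
  simpa [P.pt_zero] using
    (P.pt_mono 0 0 (P.pos 0)).trans_le (P.pt_mem_Icc (Nat.succ_le_of_lt (P.pos 0))).2

lemma abs_sub_le_oscP {T : ℝ} {S : ℝ → ℝ} {P : PartitionSeq T} (hS : ContinuousOn S (Icc 0 T))
    {n j : ℕ} (hj : j < P.N n) : |S (P.pt n (j + 1)) - S (P.pt n j)| ≤ oscP S P n := by
  obtain ⟨M, hM⟩ := isCompact_Icc.exists_bound_of_continuousOn hS
  refine le_csSup ⟨2 * M, ?_⟩ ⟨j, hj, _, right_mem_Icc.2 (P.pt_mono n j hj).le,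
    _, left_mem_Icc.2 (P.pt_mono n j hj).le, rfl⟩
  rintro y ⟨i, hi, u, hu, v, hv, rfl⟩
  have hcell : Icc (P.pt n i) (P.pt n (i + 1)) ⊆ Icc 0 T :=
    Icc_subset_Icc (P.pt_mem_Icc hi.le).1 (P.pt_mem_Icc hi).2
  have hu := hM u (hcell hu)
  have hv := hM v (hcell hv)
  rw [Real.norm_eq_abs] at hu hv
  linarith [abs_sub (S u) (S v)]

section DiscreteLocalTime

variable {T : ℝ} (S : ℝ → ℝ) (P : PartitionSeq T) (p n : ℕ)

lemma discLT_nonneg (t x : ℝ) : 0 ≤ discLT S P p n t x :=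
  Finset.sum_nonneg fun _ _ => by
    split_ifs
    · exact indicator_nonneg (fun _ _ => by positivity) x
    · exact le_rfl

lemma discLT_eq_of_forall_notMem_uIoc {c d x : ℝ} (hcd : c ≤ d)
    (h : ∀ j < P.N n, c < P.pt n j → P.pt n j ≤ d →
      x ∉ uIoc (S (P.pt n j)) (S (P.pt n (j + 1)))) :
    discLT S P p n d x = discLT S P p n c x := by
  refine Finset.sum_congr rfl fun j hj => ?_
  by_cases hjc : P.pt n j ≤ c
  · rw [if_pos hjc, if_pos (hjc.trans hcd)]
  by_cases hjd : P.pt n j ≤ d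
  · rw [if_pos hjd, if_neg hjc,
      indicator_of_notMem (h j (Finset.mem_range.1 hj) (not_le.1 hjc) hjd)]
  · rw [if_neg hjd, if_neg hjc]

lemma discLT_zero_le (x : ℝ) :
    discLT S P p n 0 x ≤ |S (P.pt n 1) - S (P.pt n 0)| ^ (p - 1) := by
  have hfirst : discLT S P p n 0 x = indicator (uIoc (S (P.pt n 0)) (S (P.pt n 1)))
      (fun _ => |S (P.pt n 1) - x| ^ (p - 1)) x := by
    rw [discLT, Finset.sum_eq_single_of_mem 0 (Finset.mem_range.2 (P.pos n)),
      if_pos (P.pt_zero n).le]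
    intro j hj hj0
    have h1j : P.pt n 1 ≤ P.pt n j := P.monotoneOn_pt n (Nat.succ_le_of_lt (P.pos n))
      (Finset.mem_range.1 hj).le (Nat.one_le_iff_ne_zero.2 hj0)
    have h01 := P.pt_mono n 0 (P.pos n)
    rw [P.pt_zero] at h01
    exact if_neg (not_le.2 (h01.trans_le h1j))
  rw [hfirst]
  by_cases hx : x ∈ uIoc (S (P.pt n 0)) (S (P.pt n 1))
  · rw [indicator_of_mem hx]
    exact pow_le_pow_left₀ (abs_nonneg _) (abs_sub_right_of_mem_uIcc (uIoc_subset_uIcc hx)) _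
  · rw [indicator_of_notMem hx]
    positivity

end DiscreteLocalTime

lemma StieltjesFunction.measure_eq_zero_of_locally_const {σ : StieltjesFunction ℝ}
    (hσ : Continuous σ) {s : Set ℝ} (h : ∀ x ∈ s, ∃ c d, Icc c d ∈ 𝓝[s] x ∧ σ c = σ d) :
    σ.measure s = 0 :=
  measure_null_of_locally_null s fun x hx => by
    obtain ⟨c, d, hcd, hσcd⟩ := h x hx
    refine ⟨Icc c d, hcd, ?_⟩
    rw [σ.measure_Icc, hσ.continuousWithinAt.leftLim_eq, hσcd, sub_self, ENNReal.ofReal_zero]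

namespace HasCLT

variable {T : ℝ} {P : PartitionSeq T} {p : ℕ} {S : ℝ → ℝ} {L : ℝ → ℝ → ℝ}

lemma continuous_left (hL : HasCLT P p S L) (x : ℝ) : Continuous fun t => L t x :=
  hL.2.2.comp (continuous_id.prodMk continuous_const)

lemma tendsto_discLT (hL : HasCLT P p S L) {t : ℝ} (ht : t ∈ Icc 0 T) (x : ℝ) :
    Tendsto (fun n => discLT S P p n t x) atTop (𝓝 (L t x)) :=
  (hL.2.1 t ht).tendsto_at x

lemma zero_left (hL : HasCLT P p S L) (hS : ContinuousOn S (Icc 0 T)) (hp : 2 ≤ p) (x : ℝ) :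
    L 0 x = 0 := by
  have hosc : Tendsto (fun n => oscP S P n ^ (p - 1)) atTop (𝓝 0) := by
    simpa [zero_pow (show p - 1 ≠ 0 by omega)] using hL.1.pow (p - 1)
  refine tendsto_nhds_unique (hL.tendsto_discLT ⟨le_rfl, P.horizon_pos.le⟩ x)
    (squeeze_zero (fun n => discLT_nonneg S P p n 0 x) (fun n => ?_) hosc)
  exact (discLT_zero_le S P p n x).trans
    (pow_le_pow_left₀ (abs_nonneg _) (abs_sub_le_oscP hS (P.pos n)) _)

lemma eq_of_forall_ne (hL : HasCLT P p S L) (hS : ContinuousOn S (Icc 0 T)) {a c d : ℝ}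
    (hc : 0 ≤ c) (hcd : c ≤ d) (hd : d ≤ T) (hne : ∀ u ∈ Icc c d, S u ≠ a) :
    L c a = L d a := by
  obtain ⟨u₀, hu₀, hmin⟩ := isCompact_Icc.exists_isMinOn (nonempty_Icc.2 hcd)
    ((hS.mono (Icc_subset_Icc hc hd)).sub continuousOn_const).abs
  have hε : 0 < |S u₀ - a| := abs_pos.2 (sub_ne_zero.2 (hne u₀ hu₀))
  have hev : ∀ᶠ n in atTop, discLT S P p n d a = discLT S P p n c a := by
    filter_upwards [hL.1.eventually_lt_const hε] with n hn
    refine discLT_eq_of_forall_notMem_uIoc S P p n hcd fun j hj hcj hjd hmem => ?_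
    have hcross := abs_sub_left_of_mem_uIcc (uIoc_subset_uIcc hmem)
    have hfar : |S u₀ - a| ≤ |a - S (P.pt n j)| := by
      rw [abs_sub_comm a]
      exact hmin ⟨hcj.le, hjd⟩
    linarith [abs_sub_le_oscP hS (P := P) hj]
  exact tendsto_nhds_unique (hL.tendsto_discLT ⟨hc, hcd.trans hd⟩ a)
    ((hL.tendsto_discLT ⟨hc.trans hcd, hd⟩ a).congr' hev)

lemma measure_setOf_ne_eq_zero (hL : HasCLT P p S L) (hS : ContinuousOn S (Icc 0 T)) {a : ℝ}
    {σ : StieltjesFunction ℝ} (hσ : ∀ s, σ s = L s a) :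
    σ.measure {u ∈ Icc 0 T | S u ≠ a} = 0 := by
  refine σ.measure_eq_zero_of_locally_const
    ((hL.continuous_left a).congr fun s => (hσ s).symm) ?_
  rintro x ⟨hx, hSx⟩
  obtain ⟨ε, hε, hball⟩ := (Metric.nhds_basis_closedBall.inf_principal (Icc 0 T)).mem_iff.1
    (Tendsto.eventually_ne (hS x hx) hSx)
  have hIcc : Metric.closedBall x ε ∩ Icc 0 T = Icc (max (x - ε) 0) (min (x + ε) T) := by
    rw [Real.closedBall_eq_Icc, Icc_inter_Icc]
  have hxcd : x ∈ Icc (max (x - ε) 0) (min (x + ε) T) :=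
    hIcc ▸ ⟨Metric.mem_closedBall_self hε.le, hx⟩
  refine ⟨max (x - ε) 0, min (x + ε) T, ?_, ?_⟩
  · rw [← hIcc]
    exact nhdsWithin_mono x (sep_subset _ _)
      ((Metric.nhds_basis_closedBall.inf_principal (Icc 0 T)).mem_of_mem hε)
  · rw [hσ, hσ]
    exact hL.eq_of_forall_ne hS (le_max_right _ _) (hxcd.1.trans hxcd.2) (min_le_right _ _)
      fun u hu => hball (hIcc ▸ hu)

end HasCLT

theorem local_time_grows_only_on_level_general {T : ℝ} (P : PartitionSeq T)
    (p : ℕ) (hp2 : 2 ≤ p)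
    (S : ℝ → ℝ) (hS : ContinuousOn S (Icc 0 T))
    (L : ℝ → ℝ → ℝ) (hL : HasCLT P p S L) :
    ∀ a : ℝ, ∀ t ∈ Icc (0 : ℝ) T, ∀ σ : StieltjesFunction ℝ, (∀ s, σ s = L s a) →
      (∫ u in Ioc (0 : ℝ) t, (if S u < a then (1 : ℝ) else 0) ∂σ.measure) = 0 ∧
      (∫ u in Ioc (0 : ℝ) t, (if a < S u then (1 : ℝ) else 0) ∂σ.measure) = 0 ∧
      (∫ u in Ioc (0 : ℝ) t, (if S u = a then (1 : ℝ) else 0) ∂σ.measure) = L t a := by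
  intro a t ht σ hσ
  have hae : ∀ᵐ u ∂σ.measure.restrict (Ioc 0 t), S u = a := by
    rw [ae_restrict_iff' measurableSet_Ioc]
    filter_upwards [measure_eq_zero_iff_ae_notMem.1 (hL.measure_setOf_ne_eq_zero hS hσ)]
      with u hu hut
    by_contra hne
    exact hu ⟨Icc_subset_Icc_right ht.2 (Ioc_subset_Icc_self hut), hne⟩
  refine ⟨?_, ?_, ?_⟩
  · rw [integral_congr_ae (hae.mono fun u hu => by simp [hu] : _ =ᵐ[_] fun _ => (0 : ℝ)),
      integral_zero]
  · rw [integral_congr_ae (hae.mono fun u hu => by simp [hu] : _ =ᵐ[_] fun _ => (0 : ℝ)),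
      integral_zero]
  · rw [integral_congr_ae (hae.mono fun u hu => by simp [hu] : _ =ᵐ[_] fun _ => (1 : ℝ)),
      setIntegral_const, smul_eq_mul, mul_one, measureReal_def, σ.measure_Ioc,
      ENNReal.toReal_ofReal (sub_nonneg.2 (σ.mono ht.1)), hσ, hσ, hL.zero_left hS hp2, sub_zero]

/-- Proposition 1: the continuous local time of order `p` at level `a` grows only when
`S` is at level `a`: the Lebesgue–Stieltjes integrals (in time, against the nondecreasing
function `t ↦ L_t(a)`, realized by a Stieltjes function `σ`) of `1_{S<a}` and `1_{S>a}`
vanish, and `∫_0^t 1_{S=a} dL(a) = L_t(a)`. -/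
theorem local_time_grows_only_on_level {T : ℝ} (hT : 0 < T) (P : PartitionSeq T)
    (p : ℕ) (hp : Even p) (hp2 : 2 ≤ p)
    (S : ℝ → ℝ) (hS : ContinuousOn S (Icc 0 T))
    (hmesh : Tendsto (meshP P) atTop (nhds 0))
    (L : ℝ → ℝ → ℝ) (hL : HasCLT P p S L) :
    ∀ a : ℝ, ∀ t ∈ Icc (0 : ℝ) T, ∀ σ : StieltjesFunction ℝ, (∀ s, σ s = L s a) →
      (∫ u in Ioc (0 : ℝ) t, (if S u < a then (1 : ℝ) else 0) ∂σ.measure) = 0 ∧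
      (∫ u in Ioc (0 : ℝ) t, (if a < S u then (1 : ℝ) else 0) ∂σ.measure) = 0 ∧
      (∫ u in Ioc (0 : ℝ) t, (if S u = a then (1 : ℝ) else 0) ∂σ.measure) = L t a :=
  local_time_grows_only_on_level_general P p hp2 S hS L hL
end

section
/- Let p ≥ 2 be an even integer and suppose S : [0,T] → [0,∞) is a nonnegative continuous function such that Y = S^r has a continuous local time of order p along π for some r ∈ (0,1). Then S has a continuous local time of order p along π and its local time at level 0 vanishes identically: L_t^{S,p,c}(0) = 0 for all t ∈ [0,T]. -/
open Filter MeasureTheory Set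

private lemma PartitionSeq.pt_le {T : ℝ} (P : PartitionSeq T) (n : ℕ) {j k : ℕ}
    (hjk : j ≤ k) (hk : k ≤ P.N n) : P.pt n j ≤ P.pt n k := by
  induction k with
  | zero => simp_all
  | succ m ih =>
    rcases Nat.le_succ_iff.mp hjk with h | rfl
    · calc P.pt n j ≤ P.pt n m := ih h (le_trans (Nat.le_succ m) hk)
        _ ≤ P.pt n (m+1) := (P.pt_mono n m (Nat.lt_of_succ_le hk)).le
    · rfl

private lemma PartitionSeq.pt_mem {T : ℝ} (P : PartitionSeq T) (n j : ℕ) (hj : j ≤ P.N n) :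
    P.pt n j ∈ Icc (0:ℝ) T :=
  ⟨by rw [← P.pt_zero n]; exact P.pt_le n (Nat.zero_le j) hj,
   le_trans (P.pt_le n hj le_rfl) (le_of_eq (P.pt_last n))⟩

private lemma mvt_rpow {c : ℝ} (hc : 1 ≤ c) (u v : ℝ) :
    ∃ ξ ∈ uIcc u v, v ^ c - u ^ c = (c * ξ ^ (c - 1)) * (v - u) := by
  have key : ∀ a b : ℝ, a < b → ∃ ξ ∈ uIcc a b, b ^ c - a ^ c = (c * ξ ^ (c - 1)) * (b - a) := by
    intro a b hab
    obtain ⟨ξ, hξ, he⟩ := exists_hasDerivAt_eq_slope (fun x : ℝ => x ^ c)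
      (fun x => c * x ^ (c - 1)) hab
      ((Real.continuous_rpow_const (by linarith)).continuousOn)
      (fun x _ => Real.hasDerivAt_rpow_const (Or.inr hc))
    refine ⟨ξ, ?_, ?_⟩
    · rw [uIcc_of_le hab.le]; exact Ioo_subset_Icc_self hξ
    · rw [eq_div_iff (sub_ne_zero.2 hab.ne')] at he
      linarith [he]
  rcases lt_trichotomy u v with h | rfl | h
  · exact key u v h
  · exact ⟨u, left_mem_uIcc, by ring⟩
  · obtain ⟨ξ, hξ, he⟩ := key v u h
    exact ⟨ξ, uIcc_comm u v ▸ hξ, by linarith⟩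

private lemma mem_uIoc_rpow {r : ℝ} (hr : 0 < r) {u v w : ℝ} (hu : 0 ≤ u) (hv : 0 ≤ v)
    (hw : 0 ≤ w) : w ^ r ∈ uIoc (u ^ r) (v ^ r) ↔ w ∈ uIoc u v := by
  rw [Set.mem_uIoc, Set.mem_uIoc, Real.rpow_lt_rpow_iff hu hw hr, Real.rpow_le_rpow_iff hw hv hr,
    Real.rpow_lt_rpow_iff hv hw hr, Real.rpow_le_rpow_iff hw hu hr]

private lemma abs_sub_le_of_mem_uIoc {u v w : ℝ} (h : w ∈ uIoc u v) : |v - w| ≤ |v - u| := by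
  rcases Set.mem_uIoc.mp h with ⟨h1, h2⟩ | ⟨h1, h2⟩
  · rw [abs_of_nonneg (by linarith)]
    exact le_trans (by linarith) (le_abs_self _)
  · rw [abs_of_nonpos (by linarith)]
    exact le_trans (by linarith) ((le_abs_self (u - v)).trans (le_of_eq (abs_sub_comm u v)))

/-- If `S ≥ 0` is continuous and `Y = S^r` has a continuous local time of order `p` along `π`
for some `r ∈ (0,1)`, then `S` has a continuous local time of order `p` along `π` and its
local time at level `0` vanishes identically. -/
theorem local_time_of_power_root {T : ℝ} (hT : 0 < T) (P : PartitionSeq T)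
    (p : ℕ) (hp : Even p) (hp2 : 2 ≤ p)
    (S : ℝ → ℝ) (hS : ContinuousOn S (Icc 0 T)) (hSnn : ∀ t, 0 ≤ S t)
    (r : ℝ) (hr0 : 0 < r) (hr1 : r < 1)
    (LY : ℝ → ℝ → ℝ) (hLY : HasCLT P p (fun t => S t ^ r) LY) :
    ∃ L : ℝ → ℝ → ℝ, HasCLT P p S L ∧ ∀ t ∈ Icc (0 : ℝ) T, L t 0 = 0 := by
  obtain ⟨hosc, hconv, hcont⟩ := hLY
  set Y : ℝ → ℝ := fun t => S t ^ r with hYdef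
  have hr0' : (r : ℝ) ≠ 0 := hr0.ne'
  set c : ℝ := 1 / r with hcdef
  have hc1 : 1 < c := by rw [hcdef, lt_div_iff₀ hr0]; linarith
  have hcpos : 0 < c := by linarith
  have hrc : r * c = 1 := by rw [hcdef]; field_simp
  have hYnn : ∀ u, 0 ≤ Y u := fun u => Real.rpow_nonneg (hSnn u) r
  have hfY : ∀ u, (Y u) ^ c = S u := by
    intro u
    show ((S u ^ r : ℝ) ^ c : ℝ) = S u
    rw [← Real.rpow_mul (hSnn u), hrc, Real.rpow_one]
  -- bound on Y over [0,T]
  have hYcont : ContinuousOn Y (Icc 0 T) :=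
    (Real.continuous_rpow_const hr0.le).comp_continuousOn hS
  obtain ⟨M0, hM0⟩ := (isCompact_Icc : IsCompact (Icc (0:ℝ) T)).exists_bound_of_continuousOn hYcont
  set M : ℝ := M0 + 1 with hMdef
  have hM : ∀ u ∈ Icc (0:ℝ) T, Y u ≤ M := by
    intro u hu
    have h1 := hM0 u hu
    rw [Real.norm_eq_abs] at h1
    calc Y u ≤ |Y u| := le_abs_self _
      _ ≤ M0 := h1
      _ ≤ M := by rw [hMdef]; linarith
  have hMpos : 0 < M := by
    have h1 := hM0 0 ⟨le_rfl, hT.le⟩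
    have h2 := norm_nonneg (Y 0)
    rw [hMdef]; linarith
  -- the derivative factor g and the level map A
  set g : ℝ → ℝ := fun a => (c * a ^ (c - 1)) ^ (p - 1) with hgdef
  have hgc : Continuous g :=
    (continuous_const.mul (Real.continuous_rpow_const (by linarith))).pow _
  have hg0 : g 0 = 0 := by
    show (c * (0:ℝ) ^ (c - 1)) ^ (p - 1) = 0
    rw [Real.zero_rpow (by intro h; apply absurd h; intro h2; nlinarith : c - 1 ≠ 0), mul_zero,
      zero_pow (by omega : p - 1 ≠ 0)]
  have hgnn : ∀ a, 0 ≤ a → 0 ≤ g a := fun a ha =>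
    pow_nonneg (mul_nonneg hcpos.le (Real.rpow_nonneg ha _)) _
  set A : ℝ → ℝ := fun x => (max x 0) ^ r with hAdef
  have hAc : Continuous A :=
    (Real.continuous_rpow_const hr0.le).comp (continuous_id.max continuous_const)
  have hA0 : ∀ x ≤ (0:ℝ), A x = 0 := by
    intro x hx
    show (max x 0) ^ r = 0
    rw [max_eq_right hx, Real.zero_rpow hr0']
  -- Bounded above: the oscillation set of Y
  have hbY : ∀ n, BddAbove {y | ∃ j < P.N n, ∃ u ∈ Icc (P.pt n j) (P.pt n (j + 1)),
      ∃ v ∈ Icc (P.pt n j) (P.pt n (j + 1)), y = |Y u - Y v|} := by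
    intro n
    refine ⟨M, fun y hy => ?_⟩
    obtain ⟨j, hj, u, hu, v, hv, rfl⟩ := hy
    have hmem : ∀ w ∈ Icc (P.pt n j) (P.pt n (j + 1)), w ∈ Icc (0:ℝ) T := by
      intro w hw
      exact ⟨le_trans (P.pt_mem n j hj.le).1 hw.1, le_trans hw.2 (P.pt_mem n (j+1) hj).2⟩
    have h1 := hM u (hmem u hu)
    have h2 := hM v (hmem v hv)
    have h3 := hYnn u
    have h4 := hYnn v
    rw [abs_le]; constructor <;> linarith
  have hoscYnn : ∀ n, 0 ≤ oscP Y P n := by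
    intro n
    apply Real.sSup_nonneg
    rintro y ⟨j, hj, u, hu, v, hv, rfl⟩
    exact abs_nonneg _
  have hoscY_ge : ∀ n j, j < P.N n →
      |Y (P.pt n (j+1)) - Y (P.pt n j)| ≤ oscP Y P n := by
    intro n j hj
    apply le_csSup (hbY n)
    exact ⟨j, hj, P.pt n (j+1), ⟨(P.pt_mono n j hj).le, le_rfl⟩,
      P.pt n j, ⟨le_rfl, (P.pt_mono n j hj).le⟩, rfl⟩
  -- Lipschitz-type bound for x ↦ x^c on [0, M]
  have hK : ∀ u v : ℝ, 0 ≤ u → u ≤ M → 0 ≤ v → v ≤ M →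
      |v ^ c - u ^ c| ≤ (c * M ^ (c-1)) * |v - u| := by
    intro u v hu huM hv hvM
    obtain ⟨ξ, hξ, he⟩ := mvt_rpow hc1.le u v
    rcases Set.mem_uIcc.mp hξ with ⟨h1, h2⟩ | ⟨h1, h2⟩ <;>
    · have hξ0 : 0 ≤ ξ := by linarith
      have hξM : ξ ≤ M := by linarith
      rw [he, abs_mul, abs_of_nonneg (mul_nonneg hcpos.le (Real.rpow_nonneg hξ0 _))]
      exact mul_le_mul_of_nonneg_right
        (mul_le_mul_of_nonneg_left (Real.rpow_le_rpow hξ0 hξM (by linarith)) hcpos.le)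
        (abs_nonneg _)
  refine ⟨fun t x => g (A x) * LY t (A x), ⟨?_, ?_, ?_⟩, ?_⟩
  · -- oscillations of S tend to 0
    set K := c * M ^ (c-1) with hKdef
    have hKnn : 0 ≤ K := mul_nonneg hcpos.le (Real.rpow_nonneg hMpos.le _)
    have hle : ∀ n, oscP S P n ≤ K * oscP Y P n := by
      intro n
      apply Real.sSup_le _ (mul_nonneg hKnn (hoscYnn n))
      rintro y ⟨j, hj, u, hu, v, hv, rfl⟩
      have hmem : ∀ w ∈ Icc (P.pt n j) (P.pt n (j + 1)), w ∈ Icc (0:ℝ) T := by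
        intro w hw
        exact ⟨le_trans (P.pt_mem n j hj.le).1 hw.1, le_trans hw.2 (P.pt_mem n (j+1) hj).2⟩
      have h1 : |S u - S v| = |(Y u) ^ c - (Y v) ^ c| := by rw [hfY, hfY]
      have h2 : |(Y u) ^ c - (Y v) ^ c| ≤ K * |Y u - Y v| :=
        hK (Y v) (Y u) (hYnn v) (hM v (hmem v hv)) (hYnn u) (hM u (hmem u hu))
      have h3 : |Y u - Y v| ≤ oscP Y P n :=
        le_csSup (hbY n) ⟨j, hj, u, hu, v, hv, rfl⟩
      calc |S u - S v| ≤ K * |Y u - Y v| := by rw [h1]; exact h2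
        _ ≤ K * oscP Y P n := mul_le_mul_of_nonneg_left h3 hKnn
    have hnn : ∀ n, 0 ≤ oscP S P n := by
      intro n
      apply Real.sSup_nonneg
      rintro y ⟨j, hj, u, hu, v, hv, rfl⟩
      exact abs_nonneg _
    have hlim : Tendsto (fun n => K * oscP Y P n) atTop (nhds 0) := by
      have := hosc.const_mul K
      simpa using this
    exact squeeze_zero hnn hle hlim
  · -- uniform convergence of discrete local times
    intro t ht
    have hdS : ∀ n (x : ℝ), x ≤ 0 → discLT S P p n t x = 0 := by
      intro n x hx
      apply Finset.sum_eq_zero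
      intro j hj
      rcases le_or_gt (P.pt n j) t with h | h
      · rw [if_pos h, Set.indicator_of_notMem]
        rintro hmem
        rcases Set.mem_uIoc.mp hmem with ⟨h1, _⟩ | ⟨h1, _⟩
        · exact absurd h1 (not_lt.2 (hx.trans (hSnn _)))
        · exact absurd h1 (not_lt.2 (hx.trans (hSnn _)))
      · rw [if_neg (not_le.2 h)]
    have hdY : ∀ n (a : ℝ), (a ≤ 0 ∨ M < a) → discLT Y P p n t a = 0 := by
      intro n a ha
      apply Finset.sum_eq_zero
      intro j hj
      have hjN : j < P.N n := Finset.mem_range.mp hj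
      rcases le_or_gt (P.pt n j) t with h | h
      · rw [if_pos h, Set.indicator_of_notMem]
        rintro hmem
        have hjm := P.pt_mem n j hjN.le
        have hj1m := P.pt_mem n (j+1) hjN
        rcases Set.mem_uIoc.mp hmem with ⟨h1, h2⟩ | ⟨h1, h2⟩ <;> rcases ha with ha | ha
        · exact absurd h1 (not_lt.2 (ha.trans (hYnn _)))
        · exact absurd ha (not_lt.2 (h2.trans (hM _ hj1m)))
        · exact absurd h1 (not_lt.2 (ha.trans (hYnn _)))
        · exact absurd ha (not_lt.2 (h2.trans (hM _ hjm)))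
      · rw [if_neg (not_le.2 h)]
    have hLY0 : ∀ a : ℝ, (a ≤ 0 ∨ M < a) → LY t a = 0 := by
      intro a ha
      refine tendsto_nhds_unique ((hconv t ht).tendsto_at a) ?_
      simp only [hdY _ a ha]
      exact tendsto_const_nhds
    have hLYc : Continuous fun a => LY t a :=
      hcont.comp (continuous_const.prodMk continuous_id)
    obtain ⟨B0, hB0⟩ := (isCompact_Icc : IsCompact (Icc (0:ℝ) M)).exists_bound_of_continuousOn
      hLYc.continuousOn
    have hB0nn : 0 ≤ B0 := le_trans (norm_nonneg _) (hB0 0 ⟨le_rfl, hMpos.le⟩)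
    have hB : ∀ a : ℝ, |LY t a| ≤ B0 := by
      intro a
      rcases le_or_gt a 0 with h | h
      · rw [hLY0 a (Or.inl h)]; simpa using hB0nn
      rcases le_or_gt a M with h2 | h2
      · have := hB0 a ⟨h.le, h2⟩; rwa [Real.norm_eq_abs] at this
      · rw [hLY0 a (Or.inr h2)]; simpa using hB0nn
    obtain ⟨G0, hG0⟩ := (isCompact_Icc : IsCompact (Icc (0:ℝ) M)).exists_bound_of_continuousOn
      hgc.continuousOn
    have hG0nn : 0 ≤ G0 := le_trans (norm_nonneg _) (hG0 0 ⟨le_rfl, hMpos.le⟩)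
    have hG : ∀ a, 0 ≤ a → a ≤ M → g a ≤ G0 := by
      intro a h1 h2
      have := hG0 a ⟨h1, h2⟩
      rw [Real.norm_eq_abs] at this
      exact (le_abs_self _).trans this
    rw [Metric.tendstoUniformly_iff]
    intro ε hε
    set ε₁ := ε / (2 * (B0 + 1)) with he1
    set ε₂ := ε / (2 * (G0 + 1)) with he2
    have hε₁ : 0 < ε₁ := div_pos hε (by linarith)
    have hε₂ : 0 < ε₂ := div_pos hε (by linarith)
    obtain ⟨δ, hδ0, hδ⟩ := Metric.uniformContinuousOn_iff.mp
      ((isCompact_Icc : IsCompact (Icc (0:ℝ) M)).uniformContinuousOn_of_continuous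
        hgc.continuousOn) ε₁ hε₁
    have hev1 : ∀ᶠ n in atTop, oscP Y P n < δ := hosc.eventually_lt_const hδ0
    have hev2 := Metric.tendstoUniformly_iff.mp (hconv t ht) (min ε₂ 1) (lt_min hε₂ one_pos)
    filter_upwards [hev1, hev2] with n hn1 hn2
    intro x
    rcases le_or_gt x 0 with hx | hx
    · rw [hdS n x hx, hA0 x hx, hg0, zero_mul]
      simpa using hε
    -- now x > 0
    have hax : A x = x ^ r := by
      show (max x 0) ^ r = x ^ r
      rw [max_eq_left hx.le]
    set a := x ^ r with hadef
    have ha0 : 0 < a := Real.rpow_pos_of_pos hx r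
    have hac : a ^ c = x := by
      rw [hadef, ← Real.rpow_mul hx.le, hrc, Real.rpow_one]
    have hiff : ∀ w1 w2 : ℝ, x ∈ uIoc (S w1) (S w2) ↔ a ∈ uIoc (Y w1) (Y w2) := by
      intro w1 w2
      have h1 : Y w1 = S w1 ^ r := rfl
      have h2 : Y w2 = S w2 ^ r := rfl
      rw [h1, h2, hadef]
      exact (mem_uIoc_rpow hr0 (hSnn w1) (hSnn w2) hx.le).symm
    rcases le_or_gt a M with haM | haM
    swap
    · -- level too high : both sides vanish
      have hzero : discLT S P p n t x = 0 := by
        apply Finset.sum_eq_zero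
        intro j hj
        have hjN : j < P.N n := Finset.mem_range.mp hj
        rcases le_or_gt (P.pt n j) t with h | h
        · rw [if_pos h, Set.indicator_of_notMem]
          intro hmem
          have hmem' := (hiff _ _).mp hmem
          have hj1m := P.pt_mem n (j+1) hjN
          have hjm := P.pt_mem n j hjN.le
          rcases Set.mem_uIoc.mp hmem' with ⟨h1, h2⟩ | ⟨h1, h2⟩
          · exact absurd haM (not_lt.2 (h2.trans (hM _ hj1m)))
          · exact absurd haM (not_lt.2 (h2.trans (hM _ hjm)))
        · rw [if_neg (not_le.2 h)]
      rw [hzero, hax, hLY0 a (Or.inr haM), mul_zero]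
      simpa using hε
    -- main case : 0 < a ≤ M
    have hdYnn : 0 ≤ discLT Y P p n t a := by
      apply Finset.sum_nonneg
      intro j hj
      split_ifs
      · exact Set.indicator_nonneg (fun y _ => pow_nonneg (abs_nonneg _) _) a
      · exact le_rfl
    have claimA : |discLT S P p n t x - g a * discLT Y P p n t a| ≤
        ε₁ * discLT Y P p n t a := by
      simp only [discLT]
      rw [Finset.mul_sum, ← Finset.sum_sub_distrib, Finset.mul_sum]
      refine le_trans (Finset.abs_sum_le_sum_abs _ _) (Finset.sum_le_sum ?_)
      intro j hj
      have hjN : j < P.N n := Finset.mem_range.mp hj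
      rcases le_or_gt (P.pt n j) t with hjt | hjt
      swap
      · rw [if_neg (not_le.2 hjt), if_neg (not_le.2 hjt)]
        simp
      rw [if_pos hjt, if_pos hjt]
      by_cases hmem : a ∈ uIoc (Y (P.pt n j)) (Y (P.pt n (j+1)))
      swap
      · rw [Set.indicator_of_notMem (fun h => hmem ((hiff _ _).mp h)),
          Set.indicator_of_notMem hmem]
        simp
      have hmemS : x ∈ uIoc (S (P.pt n j)) (S (P.pt n (j+1))) := (hiff _ _).mpr hmem
      rw [Set.indicator_of_mem hmemS, Set.indicator_of_mem hmem]
      have hYj1M : Y (P.pt n (j+1)) ≤ M := hM _ (P.pt_mem n (j+1) hjN)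
      have hYj1nn : 0 ≤ Y (P.pt n (j+1)) := hYnn _
      obtain ⟨ξ, hξ, he⟩ := mvt_rpow hc1.le a (Y (P.pt n (j+1)))
      have hξmem := Set.mem_uIcc.mp hξ
      have hξ0 : 0 ≤ ξ := by rcases hξmem with ⟨h1, h2⟩ | ⟨h1, h2⟩ <;> linarith
      have hξM : ξ ≤ M := by rcases hξmem with ⟨h1, h2⟩ | ⟨h1, h2⟩ <;> linarith
      have hYa : |Y (P.pt n (j+1)) - a| ≤ oscP Y P n :=
        le_trans (abs_sub_le_of_mem_uIoc hmem) (hoscY_ge n j hjN)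
      have hξa : dist ξ a < δ := by
        rw [Real.dist_eq]
        have h5 : |ξ - a| ≤ |Y (P.pt n (j+1)) - a| := by
          rcases hξmem with ⟨h1, h2⟩ | ⟨h1, h2⟩
          · rw [abs_of_nonneg (by linarith), abs_of_nonneg (by linarith)]; linarith
          · rw [abs_of_nonpos (by linarith), abs_of_nonpos (by linarith)]; linarith
        linarith
      have hgξa : |g ξ - g a| ≤ ε₁ := by
        have := hδ ξ ⟨hξ0, hξM⟩ a ⟨ha0.le, haM⟩ hξa
        rw [Real.dist_eq] at this
        exact this.le
      have heq : |S (P.pt n (j+1)) - x| ^ (p-1) = g ξ * |Y (P.pt n (j+1)) - a| ^ (p-1) := by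
        rw [show S (P.pt n (j+1)) - x = Y (P.pt n (j+1)) ^ c - a ^ c by rw [hfY, hac], he,
          abs_mul, mul_pow, abs_of_nonneg (mul_nonneg hcpos.le (Real.rpow_nonneg hξ0 _))]
      rw [heq]
      have hXnn : 0 ≤ |Y (P.pt n (j+1)) - a| ^ (p-1) := pow_nonneg (abs_nonneg _) _
      rw [← sub_mul, abs_mul, abs_of_nonneg hXnn]
      exact mul_le_mul_of_nonneg_right hgξa hXnn
    have hdYB : discLT Y P p n t a ≤ B0 + 1 := by
      have h2 := hn2 a
      rw [Real.dist_eq] at h2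
      have h4 : |LY t a - discLT Y P p n t a| < 1 := lt_of_lt_of_le h2 (min_le_right _ _)
      have h5 := hB a
      have h6 := le_abs_self (LY t a)
      have h7 := neg_abs_le (LY t a - discLT Y P p n t a)
      linarith
    rw [Real.dist_eq, hax]
    have h5 : |g a * LY t a - g a * discLT Y P p n t a| ≤ G0 * ε₂ := by
      rw [← mul_sub, abs_mul, abs_of_nonneg (hgnn a ha0.le)]
      have h6 : |LY t a - discLT Y P p n t a| ≤ ε₂ := by
        have := hn2 a
        rw [Real.dist_eq] at this
        exact this.le.trans (min_le_left _ _)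
      exact mul_le_mul (hG a ha0.le haM) h6 (abs_nonneg _) hG0nn
    have h7 : ε₁ * discLT Y P p n t a ≤ ε₁ * (B0 + 1) :=
      mul_le_mul_of_nonneg_left hdYB hε₁.le
    have e2 : ε₁ * (B0 + 1) = ε / 2 := by
      rw [he1]; field_simp
    have e1 : G0 * ε₂ < ε / 2 := by
      have h8 : G0 * ε₂ < (G0 + 1) * ε₂ := mul_lt_mul_of_pos_right (lt_add_one G0) hε₂
      have h9 : (G0 + 1) * ε₂ = ε / 2 := by rw [he2]; field_simp
      linarith
    calc |g a * LY t a - discLT S P p n t x|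
        ≤ |g a * LY t a - g a * discLT Y P p n t a| +
          |g a * discLT Y P p n t a - discLT S P p n t x| := abs_sub_le _ _ _
      _ ≤ G0 * ε₂ + ε₁ * (B0 + 1) := by
          refine add_le_add h5 ?_
          rw [abs_sub_comm]
          exact claimA.trans h7
      _ < ε := by linarith
  · -- joint continuity
    exact (hgc.comp (hAc.comp continuous_snd)).mul
      (hcont.comp (continuous_fst.prodMk (hAc.comp continuous_snd)))
  · -- vanishing at level 0
    intro t ht
    show g (A 0) * LY t (A 0) = 0
    rw [hA0 0 le_rfl, hg0, zero_mul]
end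

section
/- Let p ≥ 2 be an even integer and X : [0,T] → [0,∞) a nonnegative continuous function with finite p-th variation along π and continuous local time L^X of order p along π. Then L^X_t(0) = lim_{n→∞} Σ_{[t_j,t_{j+1}]∈π_n, t_j≤t} 1_{{X(t_j)=0}} (X(t_{j+1}))^{p-1} for every t ∈ [0,T]. -/
open Filter MeasureTheory Set

/-- Lemma 2: for a nonnegative continuous `X ∈ V_p(π)` with continuous local time `L` of
order `p` along `π`, `L_t(0) = lim_n Σ_{t_j ≤ t} 1_{X(t_j)=0} (X(t_{j+1}))^{p-1}`. -/
theorem local_time_nonneg_path {T : ℝ} (hT : 0 < T) (P : PartitionSeq T)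
    (p : ℕ) (hp : Even p) (hp2 : 2 ≤ p)
    (X : ℝ → ℝ) (hXc : ContinuousOn X (Icc 0 T)) (hXnn : ∀ t, 0 ≤ X t)
    (V : ℝ → ℝ) (hV : HasPVar P (p : ℝ) X V)
    (L : ℝ → ℝ → ℝ) (hL : HasCLT P p X L) :
    ∀ t ∈ Icc (0 : ℝ) T,
      Tendsto (fun n => ∑ j ∈ Finset.range (P.N n),
          if P.pt n j ≤ t ∧ X (P.pt n j) = 0 then (X (P.pt n (j + 1))) ^ (p - 1) else 0)
        atTop (nhds (L t 0)) := by
  classical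
  intro t ht
  have hk : p - 1 ≠ 0 := by omega
  -- discrete local time at 0 vanishes since X ≥ 0
  have hdisc0 : ∀ n, discLT X P p n t 0 = 0 := by
    intro n
    unfold discLT
    apply Finset.sum_eq_zero
    intro j _
    split
    · apply Set.indicator_of_notMem
      rw [Set.mem_uIoc]
      push_neg
      exact ⟨fun h => absurd h (not_lt.2 (hXnn _)), fun h => absurd h (not_lt.2 (hXnn _))⟩
    · rfl
  have hU := hL.2.1 t ht
  have hL0 : L t 0 = 0 := by
    have h1 : Tendsto (fun n => discLT X P p n t 0) atTop (nhds (L t 0)) := hU.tendsto_at 0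
    have h2 : Tendsto (fun n => discLT X P p n t 0) atTop (nhds 0) := by
      simp only [hdisc0]; exact tendsto_const_nhds
    exact tendsto_nhds_unique h1 h2
  rw [hL0]
  have hLc : ContinuousAt (fun x => L t x) 0 :=
    (hL.2.2.comp (continuous_const.prodMk continuous_id)).continuousAt
  rw [Metric.tendsto_atTop]
  intro η hη
  have h2p : (0:ℝ) < 2 ^ (p-1) := by positivity
  set η' := η / (2 * 2 ^ (p - 1)) with hη'def
  have hη' : 0 < η' := by positivity
  obtain ⟨ε, hε, hball⟩ := Metric.continuousAt_iff.1 hLc η' hη'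
  obtain ⟨N, hN⟩ := eventually_atTop.1 ((Metric.tendstoUniformly_iff.1 hU) η' hη')
  refine ⟨N, fun n hn => ?_⟩
  have hNn := hN n hn
  set b : ℕ → ℝ := fun j => X (P.pt n (j+1)) with hbdef
  set G := (Finset.range (P.N n)).filter
      (fun j => P.pt n j ≤ t ∧ X (P.pt n j) = 0 ∧ 0 < b j) with hGdef
  have hSsum : (∑ j ∈ Finset.range (P.N n),
      if P.pt n j ≤ t ∧ X (P.pt n j) = 0 then b j ^ (p-1) else 0)
      = ∑ j ∈ G, b j ^ (p-1) := by
    rw [hGdef, Finset.sum_filter]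
    apply Finset.sum_congr rfl
    intro j _
    by_cases h1 : P.pt n j ≤ t ∧ X (P.pt n j) = 0
    · by_cases h2 : 0 < b j
      · simp [h1.1, h1.2, h2]
      · have hbz : b j = 0 := le_antisymm (not_lt.1 h2) (hXnn _)
        simp [h1.1, h1.2, h2, hbz, zero_pow hk]
    · rw [if_neg h1, if_neg (by tauto)]
  have hSnn : (0:ℝ) ≤ ∑ j ∈ G, b j ^ (p-1) :=
    Finset.sum_nonneg fun j _ => pow_nonneg (hXnn _) _
  rw [hSsum, Real.dist_eq, sub_zero, abs_of_nonneg hSnn]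
  by_cases hGe : G.Nonempty
  · set β := G.inf' hGe b with hβdef
    have hβpos : 0 < β := by
      rw [hβdef, Finset.lt_inf'_iff]
      intro j hj
      exact ((Finset.mem_filter.1 hj).2).2.2
    set x := min β ε / 2 with hxdef
    have hx0 : 0 < x := by positivity
    have hxε : dist x 0 < ε := by
      rw [Real.dist_eq, sub_zero, abs_of_pos hx0]
      calc x ≤ ε / 2 := by
              rw [hxdef]; gcongr; exact min_le_right _ _
        _ < ε := by linarith
    have hxb : ∀ j ∈ G, x ≤ b j / 2 := by
      intro j hj
      calc x ≤ β / 2 := by rw [hxdef]; gcongr; exact min_le_left _ _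
        _ ≤ b j / 2 := by gcongr; exact Finset.inf'_le _ hj
    -- lower bound discLT at x
    have key : ∑ j ∈ G, (b j / 2) ^ (p-1) ≤ discLT X P p n t x := by
      unfold discLT
      have step1 : ∑ j ∈ G, (b j / 2) ^ (p-1) ≤
          ∑ j ∈ G, (if P.pt n j ≤ t then
            Set.indicator (Set.uIoc (X (P.pt n j)) (X (P.pt n (j + 1))))
              (fun _ => |X (P.pt n (j + 1)) - x| ^ (p - 1)) x else 0) := by
        apply Finset.sum_le_sum
        intro j hj
        obtain ⟨-, hjt, hj0, hjb⟩ := Finset.mem_filter.1 hj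
        rw [if_pos hjt, hj0]
        have hxbj : x ≤ b j := le_trans (hxb j hj) (by linarith [hjb.le])
        have hmem : x ∈ Set.uIoc (0:ℝ) (b j) := by
          rw [Set.mem_uIoc]; left; exact ⟨hx0, hxbj⟩
        rw [Set.indicator_of_mem hmem]
        have habs : b j / 2 ≤ |b j - x| := by
          rw [abs_of_nonneg (by linarith)]
          linarith [hxb j hj]
        exact pow_le_pow_left₀ (by positivity) habs _
      refine le_trans step1 (Finset.sum_le_sum_of_subset_of_nonneg
        (Finset.filter_subset _ _) ?_)
      intro j _ _
      split
      · exact Set.indicator_nonneg (fun _ _ => by positivity) _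
      · exact le_refl 0
    have hdlt : discLT X P p n t x < 2 * η' := by
      have hd1 : dist (L t x) (discLT X P p n t x) < η' := hNn x
      have hd2 : dist (L t x) (L t 0) < η' := hball hxε
      rw [hL0, Real.dist_eq, sub_zero] at hd2
      calc discLT X P p n t x ≤ |discLT X P p n t x - L t x| + |L t x| := by
            have := abs_sub_abs_le_abs_sub (discLT X P p n t x) (L t x)
            have h3 : discLT X P p n t x ≤ |discLT X P p n t x| := le_abs_self _
            linarith [abs_nonneg (L t x)]
        _ < η' + η' := by
            rw [Real.dist_eq, abs_sub_comm] at hd1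
            exact add_lt_add hd1 hd2
        _ = 2 * η' := by ring
    have hfinal : ∑ j ∈ G, b j ^ (p-1) = 2^(p-1) * ∑ j ∈ G, (b j / 2) ^ (p-1) := by
      rw [Finset.mul_sum]
      apply Finset.sum_congr rfl
      intro j _
      rw [div_pow]
      field_simp
    rw [hfinal]
    calc 2^(p-1) * ∑ j ∈ G, (b j / 2) ^ (p-1) ≤ 2^(p-1) * discLT X P p n t x := by
          gcongr
      _ < 2^(p-1) * (2 * η') := by gcongr
      _ = η := by rw [hη'def]; field_simp
  · rw [Finset.not_nonempty_iff_eq_empty.1 hGe, Finset.sum_empty]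
    exact hη
end
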